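/- With d_k(u,v,n) as above, the recurrence d_{(2k+2)_{ab}}(u,v,n) = d_{(2k+1)_b}(u,v,n) + d_{(2k)_a}(u−1, v−1, n−2k−2) + d_{(2k−1)_a}(u−1, v−2, n−4k−2) holds for all u,v ∈ ℕ and k,n ≥ 1. -/

import Mathlib

/-- The five colours a, b, ab, a², b². -/
inductive Col where
  | a | b | ab | aa | bb
deriving DecidableEq, Inhabited

open Col

/-- Position of a coloured integer in the ordering
1_{ab} < 1_a < 1_{b²} < 1_b < 2_{ab} < 2_a < 3_{a²} < 2_b < 3_{ab} < ⋯ . -/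
def colPos : ℕ × Col → ℕ
  | (k, Col.ab) => 4 * k - 4
  | (k, Col.a)  => 4 * k - 3
  | (k, Col.bb) => 4 * k - 2
  | (k, Col.b)  => 4 * k - 1
  | (k, Col.aa) => 4 * k - 6

/-- Entry of the matrix A: minimal gap below a part of size `k` and colour `x`,
above a part of colour `y`. -/
def colMinGap (k : ℕ) (x y : Col) : ℕ :=
  match x, y with
  | Col.a, y => if k % 2 = 1 then
      (match y with | Col.ab => 1 | _ => 2)
    else
      (match y with | Col.aa => 3 | Col.bb => 3 | _ => 2)
  | Col.bb, y => (match y with | Col.b => 3 | Col.bb => 4 | _ => 2)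
  | Col.b, y => if k % 2 = 1 then
      (match y with | Col.a => 1 | Col.ab => 1 | _ => 2)
    else
      (match y with | Col.a => 1 | Col.ab => 1 | Col.aa => 1 | Col.bb => 3 | _ => 2)
  | Col.ab, y => if k % 2 = 0 then
      (match y with | Col.aa => 3 | Col.bb => 3 | _ => 2)
    else
      (match y with | Col.b => 3 | Col.bb => 3 | _ => 2)
  | Col.aa, y => (match y with | Col.aa => 4 | Col.bb => 4 | _ => 3)

/-- A coloured partition as in the non-dilated Siladić theorem: parts are coloured
positive integers, squared colours only occur on odd integers, there is no part
1_{ab} or 1_{b²}, and consecutive parts satisfy the gap conditions of matrix A. -/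
def IsColPartition (l : List (ℕ × Col)) : Prop :=
  (∀ p ∈ l, 1 ≤ p.1 ∧ ((p.2 = Col.aa ∨ p.2 = Col.bb) → p.1 % 2 = 1) ∧
    p ≠ (1, Col.ab) ∧ p ≠ (1, Col.bb)) ∧
  ∀ i, i + 1 < l.length →
    l[i]!.1 ≥ l[i+1]!.1 + colMinGap l[i]!.1 l[i]!.2 l[i+1]!.2

/-- Number of parts coloured a or ab, plus twice the number of parts coloured a². -/
def aCt (l : List (ℕ × Col)) : ℕ :=
  (l.countP fun p => p.2 == Col.a || p.2 == Col.ab) +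
    2 * (l.countP fun p => p.2 == Col.aa)

/-- Number of parts coloured b or ab, plus twice the number of parts coloured b². -/
def bCt (l : List (ℕ × Col)) : ℕ :=
  (l.countP fun p => p.2 == Col.b || p.2 == Col.ab) +
    2 * (l.countP fun p => p.2 == Col.bb)

/-- D(u,v,n): coloured partitions of n with a-count u and b-count v. -/
noncomputable def Dct (u v n : ℕ) : ℕ :=
  Nat.card {l : List (ℕ × Col) // IsColPartition l ∧
    (l.map Prod.fst).sum = n ∧ aCt l = u ∧ bCt l = v}

/-- d_K(u,v,n): as D(u,v,n) but with largest part at most K in the coloured order;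
integer arguments (negative values give 0). -/
noncomputable def dct (K : ℕ × Col) (u v n : ℤ) : ℕ :=
  Nat.card {l : List (ℕ × Col) // IsColPartition l ∧
    (∀ p ∈ l, colPos p ≤ colPos K) ∧
    ((l.map Prod.fst).sum : ℤ) = n ∧ (aCt l : ℤ) = u ∧ (bCt l : ℤ) = v}

/-- e_K(u,v,n): as d_K(u,v,n) but with largest part exactly K. -/
noncomputable def ect (K : ℕ × Col) (u v n : ℤ) : ℕ :=
  Nat.card {l : List (ℕ × Col) // IsColPartition l ∧
    (∀ p ∈ l, colPos p ≤ colPos K) ∧ l ≠ [] ∧ l.head! = K ∧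
    ((l.map Prod.fst).sum : ℤ) = n ∧ (aCt l : ℤ) = u ∧ (bCt l : ℤ) = v}

/-- The generating function G_K(a,b,q) = 1 + ∑_{u,v≥0,n≥1} d_K(u,v,n) aᵘbᵛqⁿ,
as a formal power series in the variables a = X 0, b = X 1, q = X 2. -/
noncomputable def Gf (K : ℕ × Col) : MvPowerSeries (Fin 3) ℚ :=
  fun e => (dct K (e 0) (e 1) (e 2) : ℚ)


/-!
Sort the partitions with largest part at most `(2k+2)_{ab}` by their leading parts. The gap
conditions force the positions in the coloured order to decrease strictly along a partition, so a
bound on the first part bounds every part, and positions are injective on admissible parts: a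
partition not starting with `(2k+2)_{ab}` is bounded by its predecessor `(2k+1)_b`. After
`(2k+2)_{ab}` (row `ab_even`) exactly the parts up to `(2k)_a` and the part `(2k)_b` may follow,
and after `(2k)_b` (row `b_even`) exactly the parts up to `(2k-1)_a`. Removing the leading parts
shifts `(n, u, v)` by the weights `(2k+2, 1, 1)` of `(2k+2)_{ab}` and `(2k, 0, 1)` of `(2k)_b`.
-/

instance : Fintype Col :=
  ⟨{a, b, ab, aa, bb}, fun x => by cases x <;> simp⟩

def ValidPart (p : ℕ × Col) : Prop :=
  1 ≤ p.1 ∧ ((p.2 = aa ∨ p.2 = bb) → p.1 % 2 = 1) ∧ p ≠ (1, ab) ∧ p ≠ (1, bb)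

def GapOK (x y : ℕ × Col) : Prop :=
  y.1 + colMinGap x.1 x.2 y.2 ≤ x.1

theorem isColPartition_iff {l : List (ℕ × Col)} :
    IsColPartition l ↔ (∀ p ∈ l, ValidPart p) ∧ l.IsChain GapOK := by
  rw [List.isChain_iff_getElem]
  refine and_congr Iff.rfl (forall_congr' fun i => forall_congr' fun hi => ?_)
  simp [GapOK, getElem!_pos, hi, Nat.lt_of_succ_lt hi]

theorem isColPartition_cons_iff {x : ℕ × Col} {l : List (ℕ × Col)} :
    IsColPartition (x :: l) ↔
      ValidPart x ∧ (∀ y ∈ l.head?, GapOK x y) ∧ IsColPartition l := by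
  simp only [isColPartition_iff, List.forall_mem_cons, List.isChain_cons]
  tauto

/-- Only `a²` lags behind in position (`3_{a²} < 2_b`), and its gaps are at least `3`. -/
theorem colPos_lt_of_gapOK {x y : ℕ × Col} (hy : ValidPart y) (h : GapOK x y) :
    colPos y < colPos x := by
  obtain ⟨m, c⟩ := x
  obtain ⟨m', c'⟩ := y
  obtain ⟨hm', -⟩ := hy
  cases c <;> cases c' <;> simp only [GapOK, colMinGap.eq_def, colPos] at h hm' ⊢ <;>
    (try split_ifs at h) <;> omega

theorem IsColPartition.colPos_lt {x : ℕ × Col} {l : List (ℕ × Col)}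
    (h : IsColPartition (x :: l)) : ∀ p ∈ l, colPos p < colPos x := by
  obtain ⟨hvalid, hchain⟩ := isColPartition_iff.1 h
  have hdecr : (x :: l).IsChain fun p q => colPos q < colPos p :=
    hchain.imp_of_mem_imp fun _ q _ hq => colPos_lt_of_gapOK (hvalid q hq)
  have : ((x :: l).map colPos).Pairwise (· > ·) := ((List.isChain_map colPos).2 hdecr).pairwise
  exact (List.pairwise_cons.1 (List.pairwise_map.1 this)).1

theorem IsColPartition.forall_colPos_le_iff {l : List (ℕ × Col)} (h : IsColPartition l)
    {N : ℕ} : (∀ p ∈ l, colPos p ≤ N) ↔ ∀ x ∈ l.head?, colPos x ≤ N := by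
  cases l with
  | nil => simp
  | cons x l =>
    simp only [List.forall_mem_cons, List.head?_cons, Option.mem_some_iff, forall_eq',
      and_iff_left_iff_imp]
    exact fun hx p hp => (h.colPos_lt p hp).le.trans hx

theorem colPos_injOn : Set.InjOn colPos {p | ValidPart p} := by
  intro p hp q hq h
  obtain ⟨m, c⟩ := p
  obtain ⟨m', c'⟩ := q
  cases c <;> cases c' <;> simp_all [ValidPart, colPos] <;> omega

def boundedPartitions (N : ℕ) : Set (List (ℕ × Col)) :=
  {l | IsColPartition l ∧ ∀ p ∈ l, colPos p ≤ N}

theorem boundedPartitions_colPos_eq {K : ℕ × Col} (hK : ValidPart K) :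
    boundedPartitions (colPos K) =
      boundedPartitions (colPos K - 1) ∪ List.cons K '' {l | IsColPartition (K :: l)} := by
  ext l
  constructor
  · rintro ⟨hl, hbound⟩
    cases l with
    | nil => exact Or.inl ⟨hl, by simp⟩
    | cons x l =>
      by_cases hx : x = K
      · exact Or.inr ⟨l, hx ▸ hl, by rw [hx]⟩
      · have hne : colPos x ≠ colPos K := fun h =>
          hx (colPos_injOn (hl.1 x List.mem_cons_self) hK h)
        have hle := hbound x List.mem_cons_self
        exact Or.inl ⟨hl, hl.forall_colPos_le_iff.2 fun y hy => by cases hy; omega⟩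
  · rintro (⟨hl, hbound⟩ | ⟨l, hl, rfl⟩)
    · exact ⟨hl, fun p hp => (hbound p hp).trans (Nat.sub_le _ _)⟩
    · exact ⟨hl, hl.forall_colPos_le_iff.2 fun y hy => by cases hy; rfl⟩

theorem setOf_isColPartition_cons_eq {K : ℕ × Col} {N : ℕ} (hK : ValidPart K)
    (hgap : ∀ z, ValidPart z → (GapOK K z ↔ colPos z ≤ N)) :
    {l | IsColPartition (K :: l)} = boundedPartitions N := by
  ext l
  rw [Set.mem_ofPred_eq, isColPartition_cons_iff]
  constructor
  · rintro ⟨-, hhead, hl⟩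
    exact ⟨hl, hl.forall_colPos_le_iff.2 fun z hz =>
      (hgap z (hl.1 z (List.mem_of_mem_head? hz))).1 (hhead z hz)⟩
  · rintro ⟨hl, hbound⟩
    exact ⟨hK, fun z hz => (hgap z (hl.1 z (List.mem_of_mem_head? hz))).2
      (hl.forall_colPos_le_iff.1 hbound z hz), hl⟩

theorem setOf_isColPartition_cons_eq_union {K M : ℕ × Col} {N : ℕ} (hK : ValidPart K)
    (hgap : ∀ z, ValidPart z → (GapOK K z ↔ colPos z ≤ N ∨ z = M)) :
    {l | IsColPartition (K :: l)} =
      boundedPartitions N ∪ List.cons M '' {l | IsColPartition (M :: l)} := by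
  ext l
  rw [Set.mem_ofPred_eq, isColPartition_cons_iff]
  constructor
  · rintro ⟨-, hhead, hl⟩
    cases l with
    | nil => exact Or.inl ⟨hl, by simp⟩
    | cons y l =>
      rcases (hgap y (hl.1 y List.mem_cons_self)).1 (hhead y rfl) with hy | rfl
      · exact Or.inl ⟨hl, hl.forall_colPos_le_iff.2 fun z hz => by cases hz; exact hy⟩
      · exact Or.inr ⟨l, hl, rfl⟩
  · rintro (⟨hl, hbound⟩ | ⟨l, hl, rfl⟩)
    · exact ⟨hK, fun z hz => (hgap z (hl.1 z (List.mem_of_mem_head? hz))).2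
        (Or.inl (hl.forall_colPos_le_iff.1 hbound z hz)), hl⟩
    · exact ⟨hK, fun z hz => (hgap z (hl.1 z (List.mem_of_mem_head? hz))).2
        (Or.inr (by cases hz; rfl)), hl⟩

theorem validPart_ab_even (k : ℕ) : ValidPart (2 * k + 2, ab) := by
  simp [ValidPart]

theorem validPart_b (k : ℕ) (hk : 1 ≤ k) : ValidPart (k, b) := by
  simp [ValidPart, hk]

theorem gapOK_ab_even_iff {k : ℕ} (hk : 1 ≤ k) {z : ℕ × Col} (hz : ValidPart z) :
    GapOK (2 * k + 2, ab) z ↔ colPos z ≤ colPos (2 * k, a) ∨ z = (2 * k, b) := by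
  obtain ⟨m, c⟩ := z
  obtain ⟨hm, hodd, -⟩ := hz
  have : (2 * k + 2) % 2 = 0 := by omega
  cases c <;> simp [GapOK, colMinGap.eq_def, colPos, this] at hodd ⊢ <;> omega

theorem gapOK_b_even_iff {k : ℕ} (hk : 1 ≤ k) {z : ℕ × Col} (hz : ValidPart z) :
    GapOK (2 * k, b) z ↔ colPos z ≤ colPos (2 * k - 1, a) := by
  obtain ⟨m, c⟩ := z
  obtain ⟨hm, hodd, -⟩ := hz
  have : (2 * k) % 2 = 0 := by omega
  cases c <;> simp [GapOK, colMinGap.eq_def, colPos, this] at hodd ⊢ <;> omega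

def stats (l : List (ℕ × Col)) : ℤ × ℤ × ℤ :=
  ((l.map Prod.fst).sum, aCt l, bCt l)

theorem stats_cons (x : ℕ × Col) (l : List (ℕ × Col)) :
    stats (x :: l) = stats [x] + stats l := by
  obtain ⟨m, c⟩ := x
  cases c <;> simp [stats, aCt, bCt] <;> omega

theorem dct_eq_ncard (K : ℕ × Col) (u v n : ℤ) :
    dct K u v n = (boundedPartitions (colPos K) ∩ stats ⁻¹' {(n, u, v)}).ncard := by
  rw [dct, ← Nat.card_coe_set_eq]
  congr
  ext l
  simp [boundedPartitions, stats, and_assoc]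

theorem finite_setOf_sum_fst_eq (α : Type*) [Finite α] (m : ℕ) :
    {l : List (ℕ × α) | (∀ p ∈ l, 1 ≤ p.1) ∧ (l.map Prod.fst).sum = m}.Finite := by
  let s : Set (ℕ × α) := Set.Icc 1 m ×ˢ Set.univ
  have : Finite s := ((Set.finite_Icc 1 m).prod Set.finite_univ).to_subtype
  refine ((List.finite_length_le s m).image (List.map Subtype.val)).subset ?_
  rintro l ⟨hpos, rfl⟩
  have hle (p) (hp : p ∈ l) : p.1 ≤ (l.map Prod.fst).sum :=
    List.single_le_sum (fun _ _ => Nat.zero_le _) _ (List.mem_map_of_mem hp)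
  refine ⟨l.attachWith (· ∈ s) fun p hp =>
    Set.mem_prod.2 ⟨Set.mem_Icc.2 ⟨hpos p hp, hle p hp⟩, Set.mem_univ _⟩, ?_,
    List.attachWith_map_subtype_val _⟩
  refine List.length_attachWith.trans_le ?_
  simpa using List.length_le_sum_of_one_le (l.map Prod.fst) (by simpa using hpos)

theorem finite_isColPartition_inter_stats (t : ℤ × ℤ × ℤ) :
    ({l | IsColPartition l} ∩ stats ⁻¹' {t}).Finite := by
  refine (finite_setOf_sum_fst_eq Col t.1.toNat).subset ?_
  rintro l ⟨hl, rfl⟩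
  exact ⟨fun p hp => (hl.1 p hp).1, (Int.toNat_natCast _).symm⟩

theorem image_cons_inter_stats (x : ℕ × Col) (S : Set (List (ℕ × Col))) (t : ℤ × ℤ × ℤ) :
    List.cons x '' S ∩ stats ⁻¹' {t} = List.cons x '' (S ∩ stats ⁻¹' {t - stats [x]}) := by
  rw [← Set.image_inter_preimage]
  congr 1
  ext l
  simp only [Set.mem_inter_iff, Set.mem_preimage, Set.mem_singleton_iff, stats_cons x l,
    eq_sub_iff_add_eq']

theorem ncard_union_image_cons_inter_stats {N : ℕ} {x : ℕ × Col} (hN : N < colPos x)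
    (t : ℤ × ℤ × ℤ) :
    ((boundedPartitions N ∪ List.cons x '' {l | IsColPartition (x :: l)}) ∩
        stats ⁻¹' {t}).ncard =
      (boundedPartitions N ∩ stats ⁻¹' {t}).ncard +
        ({l | IsColPartition (x :: l)} ∩ stats ⁻¹' {t - stats [x]}).ncard := by
  have hdisj : Disjoint (boundedPartitions N) (List.cons x '' {l | IsColPartition (x :: l)}) := by
    rw [Set.disjoint_left]
    rintro _ ⟨-, hbound⟩ ⟨l, -, rfl⟩
    exact (hbound x List.mem_cons_self).not_gt hN
  have hfin := finite_isColPartition_inter_stats t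
  rw [Set.union_inter_distrib_right,
    Set.ncard_union_eq (hdisj.mono Set.inter_subset_left Set.inter_subset_left)
      (hfin.subset (Set.inter_subset_inter_left _ fun l hl => hl.1))
      (hfin.subset (Set.inter_subset_inter_left _ (by rintro _ ⟨l, hl, rfl⟩; exact hl))),
    image_cons_inter_stats, Set.ncard_image_of_injective _ List.cons_injective]

theorem recurrence_eqd5_general (u v k n : ℕ) (hk : 1 ≤ k) :
    dct (2*k+2, Col.ab) u v n =
      dct (2*k+1, Col.b) u v n +
      dct (2*k, Col.a) ((u : ℤ) - 1) ((v : ℤ) - 1) ((n : ℤ) - (2*k+2)) +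
      dct (2*k-1, Col.a) ((u : ℤ) - 1) ((v : ℤ) - 2) ((n : ℤ) - (4*k+2)) := by
  have hpos : colPos (2 * k + 2, ab) - 1 = colPos (2 * k + 1, b) := by simp [colPos]; omega
  rw [dct_eq_ncard, boundedPartitions_colPos_eq (validPart_ab_even k),
    ncard_union_image_cons_inter_stats (by simp [colPos]; omega),
    setOf_isColPartition_cons_eq_union (validPart_ab_even k) fun _ => gapOK_ab_even_iff hk,
    ncard_union_image_cons_inter_stats (by simp [colPos]; omega),
    setOf_isColPartition_cons_eq (validPart_b (2 * k) (by omega)) fun _ => gapOK_b_even_iff hk,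
    hpos, dct_eq_ncard, dct_eq_ncard, dct_eq_ncard, add_assoc]
  have hshift₁ : ((n : ℤ), (u : ℤ), (v : ℤ)) - stats [(2 * k + 2, ab)] =
      ((n : ℤ) - (2 * k + 2), (u : ℤ) - 1, (v : ℤ) - 1) := by
    simp [stats, aCt, bCt]
  have hshift₂ : ((n : ℤ) - (2 * k + 2), (u : ℤ) - 1, (v : ℤ) - 1) - stats [(2 * k, b)] =
      ((n : ℤ) - (4 * k + 2), (u : ℤ) - 1, (v : ℤ) - 2) := by
    simp [stats, aCt, bCt]
    constructor <;> ring
  rw [hshift₁, hshift₂]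

/-- Recurrence (3.5): d_{(2k+2)_{ab}}(u,v,n) = d_{(2k+1)_b}(u,v,n)
+ d_{(2k)_a}(u-1,v-1,n-2k-2) + d_{(2k-1)_a}(u-1,v-2,n-4k-2). -/
theorem recurrence_eqd5 (u v k n : ℕ) (hk : 1 ≤ k) (hn : 1 ≤ n) :
    dct (2*k+2, Col.ab) u v n =
      dct (2*k+1, Col.b) u v n +
      dct (2*k, Col.a) ((u : ℤ) - 1) ((v : ℤ) - 1) ((n : ℤ) - (2*k+2)) +
      dct (2*k-1, Col.a) ((u : ℤ) - 1) ((v : ℤ) - 2) ((n : ℤ) - (4*k+2)) :=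
  recurrence_eqd5_general u v k n hk
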